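/- Let d ≥ 2, δ > 0, Z the δ-grid on a box [a,b] ⊆ ℝ^d, and f : Z → {-1,0,1}^d positive-switching, δ-continuous, with f_i weakly decreasing in x_j for all i ≠ j. Fix a coordinate hyperplane value y_d (a grid value of the last coordinate), and suppose y = (y_1,…,y_{d-1},y_d) is a grid point with f_j(y) = 0 for all j ∈ {1,…,d-1} and f_d(y) < 0. Then f restricted to the sub-box [y, b] ∩ Z is positive-switching on [y, b]. -/

import Mathlib

/-- Membership in the δ-grid on the box `[a,b]`. -/
def onGrid {n : ℕ} (a b : Fin n → ℝ) (δ : ℝ) (x : Fin n → ℝ) : Prop :=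
  ∀ i, (∃ k : ℕ, x i = a i + k * δ) ∧ x i ≤ b i

/-!
Moving from `y` to `x ≥ y` one coordinate at a time, never touching coordinate `i` (where
`x i = y i`), every step increases a coordinate `j ≠ i` and so can only decrease `f_i`. Hence
`f_i(x) ≤ f_i(y) ≤ 0` on the face `x_i = y_i` of `[y,b]`; the face `x_i = b_i` is a face of the
whole box.
-/

theorem onGrid_iff_mem_pi {n : ℕ} {a b : Fin n → ℝ} {δ : ℝ} {x : Fin n → ℝ} :
    onGrid a b δ x ↔ x ∈ Set.univ.pi fun i => {t | (∃ k : ℕ, t = a i + k * δ) ∧ t ≤ b i} := by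
  simp [onGrid]

section AntitoneOffCoord

variable {ι α β : Type*} [Fintype ι] [DecidableEq ι] [Preorder α] [Preorder β]
  {T : ι → Set α} {g : (ι → α) → β} {i : ι}

theorem le_of_antitone_of_ne_coord
    (hg : ∀ x ∈ Set.univ.pi T, ∀ x' ∈ Set.univ.pi T, ∀ j, (∀ k, k ≠ j → x' k = x k) →
      x j ≤ x' j → i ≠ j → g x' ≤ g x)
    {x y : ι → α} (hx : x ∈ Set.univ.pi T) (hy : y ∈ Set.univ.pi T) (hyx : y ≤ x)
    (hxy : x i = y i) : g x ≤ g y := by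
  have hstep : ∀ s : Finset ι, i ∉ s → g (s.piecewise x y) ≤ g y := by
    intro s
    induction s using Finset.induction with
    | empty => simp
    | @insert j s hjs ih =>
      intro hi
      rw [Finset.mem_insert, not_or] at hi
      rw [Finset.piecewise_insert]
      have hmem := s.piecewise_mem_set_pi hx hy
      refine (hg _ hmem _ ?_ j (fun k hk => Function.update_of_ne hk _ _) ?_ hi.1).trans (ih hi.2)
      · exact (Set.update_mem_pi_iff_of_mem hmem).mpr fun _ => hx j trivial
      · simpa [hjs] using hyx j
  simpa [← hxy] using hstep _ (Finset.notMem_erase i Finset.univ)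

end AntitoneOffCoord

theorem subbox_positive_switching_general {d : ℕ} (δ : ℝ)
    (a b : Fin (d + 1) → ℝ)
    (f : (Fin (d + 1) → ℝ) → Fin (d + 1) → ℤ)
    (hmono : ∀ x x', onGrid a b δ x → onGrid a b δ x' →
      ∀ j, (∀ k, k ≠ j → x' k = x k) → x j ≤ x' j → ∀ i, i ≠ j → f x' i ≤ f x i)
    (hswitch : ∀ x, onGrid a b δ x →
      ∀ i, (x i = a i → f x i ≤ 0) ∧ (x i = b i → 0 ≤ f x i))
    (y : Fin (d + 1) → ℝ) (hy : onGrid a b δ y)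
    (hyzero : ∀ j, j ≠ Fin.last d → f y j = 0)
    (hyneg : f y (Fin.last d) < 0) :
    ∀ x, onGrid a b δ x → (∀ i, y i ≤ x i) →
      ∀ i, (x i = y i → f x i ≤ 0) ∧ (x i = b i → 0 ≤ f x i) := by
  intro x hx hyx i
  refine ⟨fun hxi => ?_, (hswitch x hx i).2⟩
  have hfx : f x i ≤ f y i :=
    le_of_antitone_of_ne_coord (g := (f · i))
      (fun x hx x' hx' j hk hj hi => hmono x x' (onGrid_iff_mem_pi.mpr hx)
        (onGrid_iff_mem_pi.mpr hx') j hk hj i hi)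
      (onGrid_iff_mem_pi.mp hx) (onGrid_iff_mem_pi.mp hy) hyx hxi
  rcases eq_or_ne i (Fin.last d) with rfl | hi
  · exact hfx.trans hyneg.le
  · exact hfx.trans (hyzero i hi).le

/-- Case 2 of the recursive algorithm for Theorem 1.5 (dimension `d + 1 ≥ 2`):
if `y` is a grid point with `f_j(y) = 0` for all non-last coordinates `j` and
`f_d(y) < 0`, then `f` restricted to the sub-box `[y,b]` is positive-switching:
`x_i = y_i` implies `f_i(x) ≤ 0` and `x_i = b_i` implies `f_i(x) ≥ 0`. -/
theorem subbox_positive_switching {d : ℕ} (hd : 1 ≤ d) (δ : ℝ) (hδ : 0 < δ)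
    (a b : Fin (d + 1) → ℝ) (hbox : ∀ i, ∃ m : ℕ, b i = a i + m * δ)
    (f : (Fin (d + 1) → ℝ) → Fin (d + 1) → ℤ)
    (hval : ∀ x, onGrid a b δ x → ∀ i, f x i = -1 ∨ f x i = 0 ∨ f x i = 1)
    (hcont : ∀ x, onGrid a b δ x → ∀ j, onGrid a b δ (Function.update x j (x j + δ)) →
      ∀ i, |f (Function.update x j (x j + δ)) i - f x i| ≤ 1)
    (hmono : ∀ x x', onGrid a b δ x → onGrid a b δ x' →
      ∀ j, (∀ k, k ≠ j → x' k = x k) → x j ≤ x' j → ∀ i, i ≠ j → f x' i ≤ f x i)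
    (hswitch : ∀ x, onGrid a b δ x →
      ∀ i, (x i = a i → f x i ≤ 0) ∧ (x i = b i → 0 ≤ f x i))
    (y : Fin (d + 1) → ℝ) (hy : onGrid a b δ y)
    (hyzero : ∀ j, j ≠ Fin.last d → f y j = 0)
    (hyneg : f y (Fin.last d) < 0) :
    ∀ x, onGrid a b δ x → (∀ i, y i ≤ x i) →
      ∀ i, (x i = y i → f x i ≤ 0) ∧ (x i = b i → 0 ≤ f x i) :=
  subbox_positive_switching_general δ a b f hmono hswitch y hy hyzero hyneg
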